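/- arXiv:1507.00163 — 4 statements merged into one kernel-verified Lean document; each statement's English description precedes it below -/
import Mathlib

section
/- If R_i (i ∈ I) is a family of backward CRN bisimulations for a CRN (S,R), then the transitive closure of their union R = (⋃_{i∈I} R_i)* is also a backward CRN bisimulation for (S,R). -/
open scoped Classical BigOperators

/-- A chemical reaction `ρ →α π`. -/
structure Reaction (S : Type*) where
  reactant : Multiset S
  product  : Multiset S
  rate     : ℝ

variable {S : Type*}

/-- ρ-reaction rate `crr(X,ρ) = (ρ(X)+1) · Σ_{X+ρ →α π ∈ R} α`. -/
noncomputable def crr [DecidableEq S] (Rs : Finset (Reaction S)) (X : S) (ρ : Multiset S) : ℝ :=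
  ((ρ.count X : ℝ) + 1) * ∑ r ∈ Rs, if r.reactant = X ::ₘ ρ then r.rate else 0

/-- ρ-production rate `pr(X,ρ,Z) = (ρ(X)+1) · Σ_{X+ρ →α π ∈ R} α·π(Z)`. -/
noncomputable def pr [DecidableEq S] (Rs : Finset (Reaction S)) (X : S) (ρ : Multiset S) (Z : S) : ℝ :=
  ((ρ.count X : ℝ) + 1) * ∑ r ∈ Rs, if r.reactant = X ::ₘ ρ then r.rate * (r.product.count Z : ℝ) else 0

/-- production rate towards a set of species: `pr(X,ρ,H) = Σ_{Z ∈ H} pr(X,ρ,Z)`. -/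
noncomputable def prB [DecidableEq S] [Fintype S] (Rs : Finset (Reaction S)) (X : S) (ρ : Multiset S) (H : Set S) : ℝ :=
  ∑ Z : S, if Z ∈ H then pr Rs X ρ Z else 0

/-- ρ-flux rate `fr(X,ρ) = Σ_{ρ →α π ∈ R} (π(X)−ρ(X))·α`. -/
noncomputable def fr [DecidableEq S] (Rs : Finset (Reaction S)) (X : S) (ρ : Multiset S) : ℝ :=
  ∑ r ∈ Rs, if r.reactant = ρ then ((r.product.count X : ℝ) - (ρ.count X : ℝ)) * r.rate else 0

/-- cumulative flux rate `fr(X,M) = Σ_{ρ ∈ M} fr(X,ρ)`. -/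
noncomputable def frM [DecidableEq S] (Rs : Finset (Reaction S)) (X : S) (M : Finset (Multiset S)) : ℝ :=
  ∑ ρ ∈ M, fr Rs X ρ

/-- mass-action vector field `F_X(V) = Σ_{ρ→α π}(π(X)−ρ(X))·α·Π_Y V_Y^{ρ(Y)}`. -/
noncomputable def vf [DecidableEq S] [Fintype S] (Rs : Finset (Reaction S)) (V : S → ℝ) (X : S) : ℝ :=
  ∑ r ∈ Rs, ((r.product.count X : ℝ) - (r.reactant.count X : ℝ)) * r.rate * ∏ Y : S, V Y ^ r.reactant.count Y

/-- `μ` is a choice function for the partition induced by the equivalence `e`: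
it maps every species to a fixed representative of its block. -/
def IsChoice (e : S → S → Prop) (μ : S → S) : Prop :=
  (∀ X, e X (μ X)) ∧ ∀ X Y, e X Y → μ X = μ Y

/-- forward splitter condition for a pair `(X,Y)` w.r.t. the partition induced by `e`. -/
def FSplit [DecidableEq S] [Fintype S] (Rs : Finset (Reaction S)) (e : S → S → Prop) (X Y : S) : Prop :=
  ∀ ρ : Multiset S, crr Rs X ρ = crr Rs Y ρ ∧
    ∀ W : S, prB Rs X ρ {Z | e W Z} = prB Rs Y ρ {Z | e W Z}

/-- `e` is a forward CRN bisimulation. -/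
def IsFB [DecidableEq S] [Fintype S] (Rs : Finset (Reaction S)) (e : S → S → Prop) : Prop :=
  Equivalence e ∧ ∀ X Y, e X Y → FSplit Rs e X Y

/-- the `≈`-class (w.r.t. the choice function `μ`) of the reactant multiset `ρ0`
among reactant multisets occurring in `Rs`. -/
noncomputable def reactClass [DecidableEq S] (Rs : Finset (Reaction S)) (μ : S → S) (ρ0 : Multiset S) : Finset (Multiset S) :=
  (Rs.image Reaction.reactant).filter (fun σ => σ.map μ = ρ0.map μ)

/-- backward splitter condition for a pair `(X,Y)` w.r.t. the choice function `μ`. -/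
def BSplit [DecidableEq S] (Rs : Finset (Reaction S)) (μ : S → S) (X Y : S) : Prop :=
  ∀ ρ0 ∈ Rs.image Reaction.reactant,
    frM Rs X (reactClass Rs μ ρ0) = frM Rs Y (reactClass Rs μ ρ0)

/-- `e` (with choice function `μ`) is a backward CRN bisimulation. -/
def IsBB [DecidableEq S] (Rs : Finset (Reaction S)) (e : S → S → Prop) (μ : S → S) : Prop :=
  Equivalence e ∧ IsChoice e μ ∧ ∀ X Y, e X Y → BSplit Rs μ X Y

/-- `V` is constant on the partition induced by `e`. -/
def ConstOn (e : S → S → Prop) (V : S → ℝ) : Prop := ∀ X Y, e X Y → V X = V Y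

/-- the sum of `V` over the block of `W`. -/
noncomputable def blockSum [Fintype S] (e : S → S → Prop) (V : S → ℝ) (W : S) : ℝ :=
  ∑ Z : S, if e W Z then V Z else 0

/-- The transitive closure of a union of backward CRN bisimulations is a backward CRN
bisimulation (with respect to any choice function of the resulting partition). -/
theorem stmt4 {S : Type*} [Fintype S] [DecidableEq S] {I : Type*}
    (Rs : Finset (Reaction S)) (hpos : ∀ r ∈ Rs, 0 < r.rate)
    (ef : I → (S → S → Prop)) (muf : I → (S → S))
    (hBB : ∀ i, IsBB Rs (ef i) (muf i)) :
    ∀ μ : S → S, IsChoice (Relation.ReflTransGen (fun X Y => ∃ i, ef i X Y)) μ →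
      IsBB Rs (Relation.ReflTransGen (fun X Y => ∃ i, ef i X Y)) μ := by
  intro μ hμ
  have hsymm : ∀ {X Y : S}, Relation.ReflTransGen (fun X Y => ∃ i, ef i X Y) X Y →
      Relation.ReflTransGen (fun X Y => ∃ i, ef i X Y) Y X := by
    intro X Y h
    induction h with
    | refl => exact .refl
    | tail _ h2 ih =>
      obtain ⟨i, hi⟩ := h2
      exact (Relation.ReflTransGen.single ⟨i, (hBB i).1.symm hi⟩).trans ih
  refine ⟨⟨fun _ => .refl, hsymm, Relation.ReflTransGen.trans⟩, hμ, ?_⟩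
  have hstep : ∀ i X Y, ef i X Y → BSplit Rs μ X Y := by
    intro i X Y hXY ρ0 hρ0
    have hsub : ∀ A B, ef i A B → μ A = μ B := fun A B h =>
      hμ.2 A B (Relation.ReflTransGen.single ⟨i, h⟩)
    have hfac : ∀ τ : Multiset S,
        Multiset.map μ τ = Multiset.map μ (Multiset.map (muf i) τ) := by
      intro τ
      rw [Multiset.map_map]
      exact Multiset.map_congr rfl (fun x _ => hsub x (muf i x) (((hBB i).2.1).1 x))
    set M := reactClass Rs μ ρ0 with hM
    have hgrp : ∀ Z : S, frM Rs Z M =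
        ∑ b ∈ M.image (Multiset.map (muf i)),
          ∑ ρ ∈ M.filter (fun τ => Multiset.map (muf i) τ = b), fr Rs Z ρ := by
      intro Z
      rw [frM, ← Finset.sum_fiberwise_of_maps_to
        (fun x hx => Finset.mem_image_of_mem (Multiset.map (muf i)) hx) (fr Rs Z)]
    rw [hgrp X, hgrp Y]
    apply Finset.sum_congr rfl
    intro b hb
    obtain ⟨σ, hσM, hσb⟩ := Finset.mem_image.mp hb
    have hσμ : Multiset.map μ σ = Multiset.map μ ρ0 := (Finset.mem_filter.mp hσM).2
    have hσimg : σ ∈ Rs.image Reaction.reactant := (Finset.mem_filter.mp hσM).1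
    have hfib : M.filter (fun τ => Multiset.map (muf i) τ = b) = reactClass Rs (muf i) σ := by
      ext τ
      simp only [hM, reactClass, Finset.mem_filter]
      constructor
      · rintro ⟨⟨h1, _⟩, h3⟩
        exact ⟨h1, h3.trans hσb.symm⟩
      · rintro ⟨h1, h2⟩
        refine ⟨⟨h1, ?_⟩, h2.trans hσb⟩
        calc Multiset.map μ τ = Multiset.map μ (Multiset.map (muf i) τ) := hfac τ
          _ = Multiset.map μ (Multiset.map (muf i) σ) := by rw [h2]
          _ = Multiset.map μ σ := (hfac σ).symm
          _ = Multiset.map μ ρ0 := hσμ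
    rw [hfib]
    have := (hBB i).2.2 X Y hXY σ hσimg
    simpa [frM] using this
  intro X Y hXY ρ0 hρ0
  induction hXY with
  | refl => rfl
  | tail _ h2 ih =>
    obtain ⟨i, hi⟩ := h2
    exact ih.trans (hstep i _ _ hi ρ0 hρ0)
end

section
/- A partition H of the species of a CRN is a backward CRN bisimulation if and only if H is exactly fluid lumpable, i.e., the vector field takes values constant on H at every point constant on H. -/
open scoped Classical BigOperators

variable {S : Type*}

section Aux
variable {S : Type*} [DecidableEq S]

lemma prod_pow_count [Fintype S] (V : S → ℝ) (σ : Multiset S) :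
    ∏ Y : S, V Y ^ σ.count Y = (σ.map V).prod := by
  induction σ using Multiset.induction with
  | empty => simp
  | cons a s ih =>
    simp only [Multiset.count_cons, Multiset.map_cons, Multiset.prod_cons, pow_add,
      Finset.prod_mul_distrib, ih]
    rw [mul_comm]
    congr 1
    rw [show (∏ Y : S, V Y ^ (if Y = a then 1 else 0)) = ∏ Y : S, (if Y = a then V Y else 1) by
      apply Finset.prod_congr rfl; intro Y _; split <;> simp]
    simp

lemma finsupp_prod_pow (u : S → ℝ) (m : Multiset S) :
    (Multiset.toFinsupp m).prod (fun i n => u i ^ n) = (m.map u).prod := by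
  induction m using Multiset.induction with
  | empty => simp
  | cons a s ih =>
    rw [show (a ::ₘ s) = ({a} : Multiset S) + s by simp, map_add,
      Finsupp.prod_add_index' (by intro i; simp) (by intro i m n; rw [pow_add]),
      Multiset.toFinsupp_singleton, Finsupp.prod_single_index (by simp), ih]
    simp

/-- net stoichiometric coefficient times rate. -/
noncomputable def rcoef (r : Reaction S) (X : S) : ℝ :=
  ((r.product.count X : ℝ) - (r.reactant.count X : ℝ)) * r.rate

lemma frM_reactClass (Rs : Finset (Reaction S)) (μ : S → S) (X : S) (ρ0 : Multiset S) :
    frM Rs X (reactClass Rs μ ρ0) =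
      ∑ r ∈ Rs, if r.reactant.map μ = ρ0.map μ then rcoef r X else 0 := by
  unfold frM fr reactClass
  rw [Finset.sum_comm]
  apply Finset.sum_congr rfl
  intro r hr
  rw [Finset.sum_ite_eq]
  simp only [Finset.mem_filter, Finset.mem_image, rcoef]
  by_cases hc : r.reactant.map μ = ρ0.map μ
  · rw [if_pos ⟨⟨r, hr, rfl⟩, hc⟩, if_pos hc]
  · rw [if_neg (by rintro ⟨-, h⟩; exact hc h), if_neg hc]

lemma vf_const_eq [Fintype S] (Rs : Finset (Reaction S)) (e : S → S → Prop) (μ : S → S)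
    (hμ : IsChoice e μ) (V : S → ℝ) (hconst : ConstOn e V) (X : S) :
    vf Rs V X = ∑ m ∈ Rs.image (fun r => r.reactant.map μ),
      ((m.map V).prod * ∑ r ∈ Rs, if r.reactant.map μ = m then rcoef r X else 0) := by
  have hVμ : ∀ σ : Multiset S, ((σ.map μ).map V).prod = (σ.map V).prod := by
    intro σ
    rw [Multiset.map_map]
    exact congrArg Multiset.prod
      (Multiset.map_congr rfl (fun Y _ => (hconst Y (μ Y) (hμ.1 Y)).symm))
  calc vf Rs V X = ∑ r ∈ Rs, ((r.reactant.map μ).map V).prod * rcoef r X := by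
        unfold vf
        apply Finset.sum_congr rfl
        intro r hr
        rw [prod_pow_count, hVμ, rcoef, mul_comm]
    _ = ∑ m ∈ Rs.image (fun r => r.reactant.map μ),
          ∑ r ∈ Rs.filter (fun r => r.reactant.map μ = m),
            ((r.reactant.map μ).map V).prod * rcoef r X := by
        rw [Finset.sum_fiberwise_of_maps_to (fun r hr => Finset.mem_image_of_mem _ hr)]
    _ = _ := by
        apply Finset.sum_congr rfl
        intro m hm
        rw [Finset.mul_sum, Finset.sum_filter]
        apply Finset.sum_congr rfl
        intro r hr
        by_cases hc : r.reactant.map μ = m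
        · rw [if_pos hc, if_pos hc, hc]
        · rw [if_neg hc, if_neg hc, mul_zero]

end Aux

/-- Backward CRN bisimulation characterizes exact fluid lumpability: a partition `e`
(with choice function `μ`) satisfies the backward bisimulation condition iff the vector
field is constant on `e` at every nonnegative point constant on `e`. -/
theorem stmt7 {S : Type*} [Fintype S] [DecidableEq S]
    (Rs : Finset (Reaction S)) (hpos : ∀ r ∈ Rs, 0 < r.rate)
    (e : S → S → Prop) (he : Equivalence e)
    (μ : S → S) (hμ : IsChoice e μ) :
    (∀ X Y, e X Y → BSplit Rs μ X Y) ↔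
    (∀ V : S → ℝ, (∀ X, 0 ≤ V X) → ConstOn e V → ConstOn e (vf Rs V)) := by
  constructor
  · -- backward bisimulation implies exact fluid lumpability
    intro h V hV hconst X Y hXY
    rw [vf_const_eq Rs e μ hμ V hconst X, vf_const_eq Rs e μ hμ V hconst Y]
    apply Finset.sum_congr rfl
    intro m hm
    obtain ⟨r, hr, rfl⟩ := Finset.mem_image.mp hm
    congr 1
    have := h X Y hXY r.reactant (Finset.mem_image_of_mem _ hr)
    rwa [frM_reactClass, frM_reactClass] at this
  · -- exact fluid lumpability implies backward bisimulation
    intro h X Y hXY ρ0 hρ0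
    classical
    set P : S → MvPolynomial S ℝ := fun Z => ∑ r ∈ Rs,
      MvPolynomial.monomial (Multiset.toFinsupp (r.reactant.map μ + r.reactant.map μ)) (rcoef r Z)
      with hP
    have heval : ∀ (Z : S) (u : S → ℝ),
        MvPolynomial.eval u (P Z) = vf Rs (fun W => u (μ W) ^ 2) Z := by
      intro Z u
      rw [hP]
      simp only [map_sum, MvPolynomial.eval_monomial]
      unfold vf
      apply Finset.sum_congr rfl
      intro r hr
      rw [finsupp_prod_pow, prod_pow_count]
      have hm : ((r.reactant.map μ + r.reactant.map μ).map u).prod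
          = (r.reactant.map fun W => u (μ W) ^ 2).prod := by
        rw [Multiset.map_add, Multiset.prod_add, Multiset.map_map,
          show (r.reactant.map fun W => u (μ W) ^ 2)
              = r.reactant.map fun W => (u ∘ μ) W * (u ∘ μ) W from
            Multiset.map_congr rfl (fun W _ => by simp [sq]),
          Multiset.prod_map_mul]
      rw [hm, rcoef]
    have hPXY : P X = P Y := by
      apply MvPolynomial.funext
      intro u
      rw [heval, heval]
      apply h (fun W => u (μ W) ^ 2) (fun W => sq_nonneg _) _ X Y hXY
      intro A B hAB
      simp [hμ.2 A B hAB]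
    set d : S →₀ ℕ := Multiset.toFinsupp (ρ0.map μ + ρ0.map μ) with hd
    have hcond : ∀ r : Reaction S,
        (Multiset.toFinsupp (r.reactant.map μ + r.reactant.map μ) = d)
          ↔ r.reactant.map μ = ρ0.map μ := by
      intro r
      constructor
      · intro hmm
        ext a
        have := DFunLike.congr_fun hmm a
        simp only [hd, Multiset.toFinsupp_apply, Multiset.count_add] at this
        omega
      · intro hmm; rw [hd, hmm]
    have hco := congrArg (MvPolynomial.coeff d) hPXY
    rw [hP] at hco
    simp only [MvPolynomial.coeff_sum, MvPolynomial.coeff_monomial, hcond] at hco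
    rw [frM_reactClass, frM_reactClass]
    convert hco using 2 <;> · ext r; split <;> rfl
end

section
/- (Forward bisimulation implies ordinary fluid lumpability.) If H = {H_1,…,H_m} is a forward CRN bisimulation of a CRN (S,R) with at most binary reactions, then for each block H ∈ H there exists a polynomial ℘_H in m variables such that Σ_{X∈H} F_X(V) = ℘_H(Σ_{X∈H_1} V_X, …, Σ_{X∈H_m} V_X) for all V ∈ ℝ^S_{≥0}. -/
open scoped Classical BigOperators

variable {S : Type*}

/-!
Summed over a set `H` of species, the mass-action field becomes
`∑_r α_r (|π_r ∩ H| - |ρ_r ∩ H|) V^{ρ_r}`. With reactants of size at most two this is a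
polynomial `c + ∑_Y a_Y V_Y + ∑_{Y,Z} b_{YZ} V_Y V_Z` whose coefficients are differences of
production and reaction rates (`netPr`). When `H` is a block of a forward bisimulation these
coefficients are constant on blocks, in both arguments of `b` because `b` is symmetric, and a
quadratic polynomial with block-constant coefficients is a polynomial in the block sums.
-/

noncomputable def countIn (H : Set S) (τ : Multiset S) : ℝ := (τ.filter (· ∈ H)).card

@[simp] lemma countIn_zero (H : Set S) : countIn H 0 = 0 := by simp [countIn]

lemma countIn_cons (H : Set S) (a : S) (τ : Multiset S) :
    countIn H (a ::ₘ τ) = (if a ∈ H then 1 else 0) + countIn H τ := by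
  by_cases ha : a ∈ H <;> simp [countIn, ha, add_comm]

lemma Multiset.cons_singleton_eq_cons_singleton {α : Type*} {a b c d : α} :
    a ::ₘ {b} = c ::ₘ ({d} : Multiset α) ↔ a = c ∧ b = d ∨ a = d ∧ b = c := by
  rw [Multiset.cons_eq_cons]
  constructor
  · rintro (⟨rfl, h⟩ | ⟨-, cs, h1, h2⟩)
    · simp_all
    · rw [Multiset.singleton_eq_cons_iff] at h1 h2
      aesop
  · rintro (⟨rfl, rfl⟩ | ⟨rfl, rfl⟩)
    · simp
    · by_cases h : a = b
      · simp [h]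
      · exact Or.inr ⟨h, 0, by simp⟩

section

variable [Fintype S] [DecidableEq S]

lemma sum_ite_mem_count (H : Set S) (τ : Multiset S) :
    ∑ X : S, (if X ∈ H then (τ.count X : ℝ) else 0) = countIn H τ := by
  simp_rw [countIn,
    ← Multiset.sum_count_eq_card (s := Finset.univ) (fun a _ => Finset.mem_univ a),
    Multiset.count_filter, Nat.cast_sum]
  exact Finset.sum_congr rfl fun X _ => by split_ifs <;> simp

lemma sum_ite_eq_singleton (ρ : Multiset S) :
    ∑ Y : S, (if ρ = {Y} then (1 : ℝ) else 0) = if Multiset.card ρ = 1 then 1 else 0 := by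
  split_ifs with h
  · obtain ⟨a, rfl⟩ := Multiset.card_eq_one.mp h
    simp
  · exact Finset.sum_eq_zero fun Y _ => if_neg fun hY => h (by simp [hY])

lemma sum_sum_ite_eq_cons_singleton (ρ : Multiset S) :
    ∑ Y : S, ∑ Z : S, (if ρ = Z ::ₘ {Y} then ((Multiset.count Z {Y} : ℝ) + 1) else 0) =
      if Multiset.card ρ = 2 then 2 else 0 := by
  split_ifs with h
  · obtain ⟨a, b, rfl⟩ := Multiset.card_eq_two.mp h
    have key (Y Z : S) :
        (if a ::ₘ {b} = Z ::ₘ {Y} then ((Multiset.count Z {Y} : ℝ) + 1) else 0) =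
        (if Y = b ∧ Z = a then 1 else 0) + (if Y = a ∧ Z = b then 1 else 0) := by
      simp only [Multiset.cons_singleton_eq_cons_singleton, Multiset.count_singleton]
      by_cases hY : Y = a <;> by_cases hZ : Z = a <;> by_cases hY' : Y = b <;>
        by_cases hZ' : Z = b <;> simp_all [eq_comm]
    simp_rw [Multiset.insert_eq_cons, key, Finset.sum_add_distrib, ite_and]
    norm_num
  · exact Finset.sum_eq_zero fun Y _ => Finset.sum_eq_zero fun Z _ =>
      if_neg fun hYZ => h (by simp [hYZ])

-- An unordered pair `{a, b}` arises from the two ordered pairs `(a, b)` and `(b, a)` when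
-- `a ≠ b`, but from only one when `a = b`; the weight `(count Z {Y} + 1) / 2` compensates.
lemma apply_eq_sum_ite_of_card_le_two (f : Multiset S → ℝ) {ρ : Multiset S}
    (hρ : Multiset.card ρ ≤ 2) :
    f ρ = (if ρ = 0 then f 0 else 0) + ∑ Y : S, (if ρ = {Y} then f {Y} else 0) +
      ∑ Y : S, ∑ Z : S,
        (if ρ = Z ::ₘ {Y} then ((Multiset.count Z {Y} : ℝ) + 1) / 2 * f (Z ::ₘ {Y})
          else 0) := by
  have h0 : (if ρ = 0 then f 0 else 0) = (if Multiset.card ρ = 0 then 1 else 0) * f ρ := by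
    simp only [Multiset.card_eq_zero]
    split_ifs with h <;> simp [h]
  have h1 : ∑ Y : S, (if ρ = {Y} then f {Y} else 0) =
      (if Multiset.card ρ = 1 then 1 else 0) * f ρ := by
    rw [← sum_ite_eq_singleton, Finset.sum_mul]
    exact Finset.sum_congr rfl fun Y _ => by split_ifs with h <;> simp [h]
  have h2 : ∑ Y : S, ∑ Z : S,
        (if ρ = Z ::ₘ {Y} then ((Multiset.count Z {Y} : ℝ) + 1) / 2 * f (Z ::ₘ {Y}) else 0) =
      (if Multiset.card ρ = 2 then 2 else 0) / 2 * f ρ := by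
    rw [← sum_sum_ite_eq_cons_singleton, Finset.sum_div, Finset.sum_mul]
    refine Finset.sum_congr rfl fun Y _ => ?_
    rw [Finset.sum_div, Finset.sum_mul]
    exact Finset.sum_congr rfl fun Z _ => by split_ifs with h <;> simp [h]
  rw [h0, h1, h2]
  interval_cases Multiset.card ρ <;> simp

lemma prB_eq_sum_countIn (Rs : Finset (Reaction S)) (X : S) (ρ : Multiset S) (H : Set S) :
    prB Rs X ρ H = ((ρ.count X : ℝ) + 1) *
      ∑ r ∈ Rs, if r.reactant = X ::ₘ ρ then r.rate * countIn H r.product else 0 := by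
  simp_rw [prB, pr, ← sum_ite_mem_count, Finset.mul_sum, Finset.ite_sum_zero]
  rw [Finset.sum_comm]
  refine Finset.sum_congr rfl fun r _ => ?_
  split_ifs <;> simp [Finset.mul_sum, mul_left_comm]

noncomputable def netPr (Rs : Finset (Reaction S)) (H : Set S) (X : S) (ρ : Multiset S) : ℝ :=
  prB Rs X ρ H - countIn H (X ::ₘ ρ) * crr Rs X ρ

lemma netPr_eq_sum (Rs : Finset (Reaction S)) (H : Set S) (X : S) (ρ : Multiset S) :
    netPr Rs H X ρ = ((ρ.count X : ℝ) + 1) * ∑ r ∈ Rs,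
      if r.reactant = X ::ₘ ρ then
        r.rate * (countIn H r.product - countIn H (X ::ₘ ρ)) else 0 := by
  rw [netPr, prB_eq_sum_countIn, crr, mul_left_comm, ← mul_sub, Finset.mul_sum,
    ← Finset.sum_sub_distrib]
  congr 1
  exact Finset.sum_congr rfl fun r _ => by split_ifs <;> ring

lemma netPr_singleton_comm (Rs : Finset (Reaction S)) (H : Set S) (Y Z : S) :
    netPr Rs H Z {Y} = netPr Rs H Y {Z} := by
  rw [netPr_eq_sum, netPr_eq_sum, Multiset.count_singleton, Multiset.count_singleton,
    show Z ::ₘ {Y} = Y ::ₘ {Z} from Multiset.pair_comm Z Y]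
  rcases eq_or_ne Y Z with rfl | h
  · rfl
  · simp [h, h.symm]

lemma FSplit.netPr_eq {Rs : Finset (Reaction S)} {e : Setoid S} {X Y : S}
    (h : FSplit Rs e.r X Y) (hXY : e.r X Y) (X0 : S) (ρ : Multiset S) :
    netPr Rs {Z | e.r X0 Z} X ρ = netPr Rs {Z | e.r X0 Z} Y ρ := by
  have hmem : (X ∈ {Z | e.r X0 Z}) ↔ (Y ∈ {Z | e.r X0 Z}) :=
    ⟨fun h => e.iseqv.trans h hXY, fun h => e.iseqv.trans h (e.iseqv.symm hXY)⟩
  rw [netPr, netPr, (h ρ).1, (h ρ).2 X0, countIn_cons, countIn_cons, if_congr hmem rfl rfl]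

lemma sum_vf_eq_sum_reactions (Rs : Finset (Reaction S)) (H : Set S) (V : S → ℝ) :
    ∑ X : S, (if X ∈ H then vf Rs V X else 0) =
      ∑ r ∈ Rs,
        r.rate * (countIn H r.product - countIn H r.reactant) * (r.reactant.map V).prod := by
  simp_rw [vf, ← finprod_eq_prod_of_fintype, ← Multiset.prod_map_eq_finprod,
    Finset.ite_sum_zero]
  rw [Finset.sum_comm]
  refine Finset.sum_congr rfl fun r _ => ?_
  rw [← sum_ite_mem_count, ← sum_ite_mem_count, ← Finset.sum_sub_distrib, Finset.mul_sum,
    Finset.sum_mul]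
  refine Finset.sum_congr rfl fun X _ => ?_
  split_ifs <;> ring

noncomputable def sourcePr (Rs : Finset (Reaction S)) (H : Set S) : ℝ :=
  ∑ r ∈ Rs, if r.reactant = 0 then r.rate * countIn H r.product else 0

theorem sum_vf_eq_quadratic (Rs : Finset (Reaction S))
    (hRs : ∀ r ∈ Rs, Multiset.card r.reactant ≤ 2) (H : Set S) (V : S → ℝ) :
    ∑ X : S, (if X ∈ H then vf Rs V X else 0) =
      sourcePr Rs H + ∑ Y : S, netPr Rs H Y 0 * V Y +
        ∑ Y : S, ∑ Z : S, netPr Rs H Z {Y} / 2 * (V Y * V Z) := by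
  set f : Reaction S → Multiset S → ℝ := fun r σ =>
    r.rate * (countIn H r.product - countIn H σ) * (σ.map V).prod
  have hsrc : sourcePr Rs H = ∑ r ∈ Rs, if r.reactant = 0 then f r 0 else 0 := by
    simp [f, sourcePr]
  have hlin (Y : S) :
      netPr Rs H Y 0 * V Y = ∑ r ∈ Rs, if r.reactant = {Y} then f r {Y} else 0 := by
    simp [f, netPr_eq_sum, Finset.sum_mul]
  have hquad (Y Z : S) : netPr Rs H Z {Y} / 2 * (V Y * V Z) = ∑ r ∈ Rs,
      if r.reactant = Z ::ₘ {Y} then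
        ((Multiset.count Z {Y} : ℝ) + 1) / 2 * f r (Z ::ₘ {Y}) else 0 := by
    rw [netPr_eq_sum, mul_div_right_comm, Finset.mul_sum, Finset.sum_mul]
    refine Finset.sum_congr rfl fun r _ => ?_
    split_ifs
    · simp only [f, Multiset.map_cons, Multiset.map_singleton, Multiset.prod_cons,
        Multiset.prod_singleton]
      ring
    · simp
  simp_rw [sum_vf_eq_sum_reactions, hsrc, hlin, hquad]
  simp only [Finset.sum_comm (s := Finset.univ) (t := Rs)]
  rw [← Finset.sum_add_distrib, ← Finset.sum_add_distrib]
  exact Finset.sum_congr rfl fun r hr => apply_eq_sum_ite_of_card_le_two (f r) (hRs r hr)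

end

section

variable [Fintype S]

noncomputable def classSum (e : Setoid S) (V : S → ℝ) (q : Quotient e) : ℝ :=
  ∑ Z : S, if Quotient.mk e Z = q then V Z else 0

lemma sum_mul_eq_sum_classSum (e : Setoid S) {c : S → ℝ}
    (hc : ∀ Y Y', e.r Y Y' → c Y = c Y') (V : S → ℝ) :
    ∑ Y : S, c Y * V Y = ∑ q : Quotient e, c q.out * classSum e V q := by
  simp_rw [classSum, Finset.mul_sum, mul_ite, mul_zero]
  rw [Finset.sum_comm]
  refine Finset.sum_congr rfl fun Y _ => ?_
  rw [Finset.sum_ite_eq, if_pos (Finset.mem_univ _), hc _ _ (Quotient.mk_out Y)]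

lemma sum_sum_mul_eq_sum_classSum (e : Setoid S) {c : S → S → ℝ}
    (hl : ∀ Y Y' Z, e.r Y Y' → c Y Z = c Y' Z) (hr : ∀ Y Z Z', e.r Z Z' → c Y Z = c Y Z')
    (V : S → ℝ) :
    ∑ Y : S, ∑ Z : S, c Y Z * (V Y * V Z) =
      ∑ q : Quotient e, ∑ q' : Quotient e,
        c q.out q'.out * (classSum e V q * classSum e V q') := by
  calc ∑ Y : S, ∑ Z : S, c Y Z * (V Y * V Z)
      = ∑ Y : S, (∑ Z : S, c Y Z * V Z) * V Y := by
        simp_rw [Finset.sum_mul]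
        exact Finset.sum_congr rfl fun Y _ => Finset.sum_congr rfl fun Z _ => by ring
    _ = ∑ Y : S, (∑ q' : Quotient e, c Y q'.out * classSum e V q') * V Y :=
        Finset.sum_congr rfl fun Y _ => by rw [sum_mul_eq_sum_classSum e (hr Y)]
    _ = ∑ q : Quotient e,
          (∑ q' : Quotient e, c q.out q'.out * classSum e V q') * classSum e V q :=
        sum_mul_eq_sum_classSum e
          (fun Y Y' h => Finset.sum_congr rfl fun q' _ => by rw [hl Y Y' _ h]) V
    _ = _ := by
        simp_rw [Finset.sum_mul, mul_assoc, mul_comm (classSum e V _) (classSum e V _)]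

end

theorem stmt9_general {S : Type*} [Fintype S] [DecidableEq S]
    (Rs : Finset (Reaction S))
    (helem : ∀ r ∈ Rs, Multiset.card r.reactant ≤ 2)
    (e : Setoid S) (hfb : IsFB Rs e.r) (X0 : S) :
    ∃ p : MvPolynomial (Quotient e) ℝ,
      ∀ V : S → ℝ, (∀ X, 0 ≤ V X) →
        (∑ X : S, if e.r X0 X then vf Rs V X else 0) =
          MvPolynomial.eval (fun q => ∑ Z : S, if Quotient.mk e Z = q then V Z else 0) p := by
  set H : Set S := {Z | e.r X0 Z}
  have hlin (Y Y' : S) (h : e.r Y Y') : netPr Rs H Y 0 = netPr Rs H Y' 0 :=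
    (hfb.2 Y Y' h).netPr_eq h X0 0
  have hquad_r (Y Z Z' : S) (h : e.r Z Z') : netPr Rs H Z {Y} / 2 = netPr Rs H Z' {Y} / 2 := by
    rw [(hfb.2 Z Z' h).netPr_eq h]
  have hquad_l (Y Y' Z : S) (h : e.r Y Y') : netPr Rs H Z {Y} / 2 = netPr Rs H Z {Y'} / 2 := by
    rw [netPr_singleton_comm, (hfb.2 Y Y' h).netPr_eq h, netPr_singleton_comm]
  open MvPolynomial in
  refine ⟨C (sourcePr Rs H) + ∑ q, C (netPr Rs H q.out 0) * X q +
    ∑ q, ∑ q', C (netPr Rs H q'.out {q.out} / 2) * (X q * X q'), fun V _ => ?_⟩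
  change _ = MvPolynomial.eval (classSum e V) _
  refine (sum_vf_eq_quadratic Rs helem H V).trans ?_
  rw [sum_mul_eq_sum_classSum e hlin, sum_sum_mul_eq_sum_classSum e hquad_l hquad_r]
  simp

/-- Forward bisimulation implies ordinary fluid lumpability: for each block there is a
polynomial in the block variables whose evaluation at the block sums gives the sum of
the vector field over the block, on the nonnegative orthant. -/
theorem stmt9 {S : Type*} [Fintype S] [DecidableEq S]
    (Rs : Finset (Reaction S)) (hpos : ∀ r ∈ Rs, 0 < r.rate)
    (helem : ∀ r ∈ Rs, Multiset.card r.reactant ≤ 2)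
    (e : Setoid S) (hfb : IsFB Rs e.r) (X0 : S) :
    ∃ p : MvPolynomial (Quotient e) ℝ,
      ∀ V : S → ℝ, (∀ X, 0 ≤ V X) →
        (∑ X : S, if e.r X0 X then vf Rs V X else 0) =
          MvPolynomial.eval (fun q => ∑ Z : S, if Quotient.mk e Z = q then V Z else 0) p :=
  stmt9_general Rs helem e hfb X0
end

section
/- (Correctness of the partition-refinement fixed point.) Let (S,R) be a CRN and define, for a partition H of S, the refinement operator T(H) := S / (∼^χ_H ∩ ∼_H) where ∼^χ_H is either the forward or backward splitter equivalence and ∼_H the equivalence induced by H. Starting from H_0 := G and iterating H_{k+1} := T(H_k): (a) each H_{k+1} refines H_k; (b) the coarsest bisimulation H* refining G refines every H_k; (c) if H_{k} = H_{k-1} for some k then H_k equals H*, the coarsest (forward resp. backward) bisimulation refining G; (d) since S is finite, such a k exists, so the iteration terminates at the coarsest bisimulation refining G. -/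
open scoped Classical BigOperators

variable {S : Type*}

section AuxLemmas

variable {S : Type*}

private lemma sum_eq_of_fiber_eq {α β : Type*} [DecidableEq β] (A : Finset α) (g : α → β)
    (f h : α → ℝ)
    (H : ∀ a ∈ A, (∑ x ∈ A.filter (fun x => g x = g a), f x)
        = ∑ x ∈ A.filter (fun x => g x = g a), h x) :
    ∑ x ∈ A, f x = ∑ x ∈ A, h x := by
  classical
  rw [← Finset.sum_fiberwise_of_maps_to (t := A.image g)
        (fun x hx => Finset.mem_image_of_mem g hx) f,
      ← Finset.sum_fiberwise_of_maps_to (t := A.image g)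
        (fun x hx => Finset.mem_image_of_mem g hx) h]
  refine Finset.sum_congr rfl fun v hv => ?_
  obtain ⟨a, ha, rfl⟩ := Finset.mem_image.mp hv
  exact H a ha

/-- a canonical representative function for an equivalence relation. -/
noncomputable def repFun (r : S → S → Prop) (hr : Equivalence r) : S → S :=
  fun Z => (Quotient.mk (⟨r, hr⟩ : Setoid S) Z).out

private lemma repFun_choice (r : S → S → Prop) (hr : Equivalence r) :
    IsChoice r (repFun r hr) := by
  constructor
  · intro X
    have : Quotient.mk (⟨r, hr⟩ : Setoid S) ((Quotient.mk (⟨r, hr⟩ : Setoid S) X).out)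
        = Quotient.mk (⟨r, hr⟩ : Setoid S) X := Quotient.out_eq _
    exact hr.symm (Quotient.exact this)
  · intro X Y hXY
    simp only [repFun]
    congr 1
    exact Quotient.sound hXY

private lemma block_sum_mono [Fintype S] (r e : S → S → Prop) (hr : Equivalence r)
    (he : Equivalence e) (hre : ∀ X Y, r X Y → e X Y) (f h : S → ℝ)
    (hfh : ∀ W, (∑ Z, if r W Z then f Z else 0) = ∑ Z, if r W Z then h Z else 0) (W : S) :
    (∑ Z, if e W Z then f Z else 0) = ∑ Z, if e W Z then h Z else 0 := by
  classical
  rw [← Finset.sum_filter, ← Finset.sum_filter]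
  refine sum_eq_of_fiber_eq _ (repFun r hr) f h ?_
  intro a ha
  have hμ := repFun_choice r hr
  have hset : (Finset.univ.filter (fun Z => e W Z)).filter
        (fun x => repFun r hr x = repFun r hr a)
      = Finset.univ.filter (fun Z => r a Z) := by
    ext x
    simp only [Finset.mem_filter, Finset.mem_univ, true_and]
    constructor
    · rintro ⟨_, hμx⟩
      have hx' : r x (repFun r hr a) := hμx ▸ hμ.1 x
      exact hr.trans (hμ.1 a) (hr.symm hx')
    · intro hax
      refine ⟨?_, (hμ.2 a x hax).symm⟩
      have haW : e W a := (Finset.mem_filter.mp ha).2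
      exact he.trans haW (hre a x hax)
  rw [hset, Finset.sum_filter, Finset.sum_filter]
  exact hfh a

private lemma fsplit_mono [Fintype S] [DecidableEq S] (Rs : Finset (Reaction S))
    (r e : S → S → Prop) (hr : Equivalence r) (he : Equivalence e)
    (hre : ∀ X Y, r X Y → e X Y) (X Y : S) (hXY : FSplit Rs r X Y) : FSplit Rs e X Y := by
  intro ρ
  refine ⟨(hXY ρ).1, fun W => ?_⟩
  have key : ∀ W', (∑ Z, if r W' Z then pr Rs X ρ Z else 0)
      = ∑ Z, if r W' Z then pr Rs Y ρ Z else 0 := by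
    intro W'
    have := (hXY ρ).2 W'
    simpa [prB, Set.mem_setOf_eq] using this
  have := block_sum_mono r e hr he hre (pr Rs X ρ) (pr Rs Y ρ) key W
  simpa [prB, Set.mem_setOf_eq] using this

private lemma map_choice_eq (r e : S → S → Prop) (hre : ∀ X Y, r X Y → e X Y)
    (μr μe : S → S) (hμr : IsChoice r μr) (hμe : IsChoice e μe) (τ : Multiset S) :
    τ.map μe = (τ.map μr).map μe := by
  rw [Multiset.map_map]
  refine Multiset.map_congr rfl ?_
  intro x _
  exact hμe.2 x (μr x) (hre _ _ (hμr.1 x))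

private lemma bsplit_mono [DecidableEq S] (Rs : Finset (Reaction S)) (r e : S → S → Prop)
    (hre : ∀ X Y, r X Y → e X Y) (μr μe : S → S) (hμr : IsChoice r μr)
    (hμe : IsChoice e μe) (X Y : S) (hXY : BSplit Rs μr X Y) : BSplit Rs μe X Y := by
  intro ρ0 _
  show frM Rs X (reactClass Rs μe ρ0) = frM Rs Y (reactClass Rs μe ρ0)
  unfold frM
  refine sum_eq_of_fiber_eq _ (fun σ => σ.map μr) _ _ ?_
  intro a ha
  have ha' : a ∈ Rs.image Reaction.reactant ∧ a.map μe = ρ0.map μe := by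
    simpa [reactClass] using ha
  have hset : (reactClass Rs μe ρ0).filter (fun x => x.map μr = a.map μr)
      = reactClass Rs μr a := by
    ext σ
    simp only [reactClass, Finset.mem_filter]
    constructor
    · rintro ⟨⟨hmem, _⟩, hr'⟩
      exact ⟨hmem, hr'⟩
    · rintro ⟨hmem, hr'⟩
      refine ⟨⟨hmem, ?_⟩, hr'⟩
      calc σ.map μe = (σ.map μr).map μe := map_choice_eq r e hre μr μe hμr hμe σ
        _ = (a.map μr).map μe := by rw [hr']
        _ = a.map μe := (map_choice_eq r e hre μr μe hμr hμe a).symm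
        _ = ρ0.map μe := ha'.2
  rw [hset]
  exact hXY a ha'.1

private lemma fsplit_equiv [Fintype S] [DecidableEq S] (Rs : Finset (Reaction S))
    (e : S → S → Prop) : Equivalence (fun X Y => FSplit Rs e X Y) := by
  refine ⟨?_, ?_, ?_⟩
  · intro X ρ; exact ⟨rfl, fun _ => rfl⟩
  · intro X Y h ρ; exact ⟨((h ρ).1).symm, fun W => ((h ρ).2 W).symm⟩
  · intro X Y Z h1 h2 ρ
    exact ⟨((h1 ρ).1).trans (h2 ρ).1, fun W => ((h1 ρ).2 W).trans ((h2 ρ).2 W)⟩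

private lemma bsplit_equiv [DecidableEq S] (Rs : Finset (Reaction S)) (μ : S → S) :
    Equivalence (fun X Y => BSplit Rs μ X Y) := by
  refine ⟨?_, ?_, ?_⟩
  · intro X ρ0 _; rfl
  · intro X Y h ρ0 h0; exact (h ρ0 h0).symm
  · intro X Y Z h1 h2 ρ0 h0; exact (h1 ρ0 h0).trans (h2 ρ0 h0)

private lemma and_equiv {a b : S → S → Prop} (ha : Equivalence a) (hb : Equivalence b) :
    Equivalence (fun X Y => a X Y ∧ b X Y) := by
  refine ⟨fun X => ⟨ha.refl X, hb.refl X⟩, fun h => ⟨ha.symm h.1, hb.symm h.2⟩,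
    fun h1 h2 => ⟨ha.trans h1.1 h2.1, hb.trans h1.2 h2.2⟩⟩

private lemma exists_fix {S : Type*} [Fintype S] (H : ℕ → (S → S → Prop))
    (hmono : ∀ k X Y, H (k+1) X Y → H k X Y) : ∃ k, H (k+1) = H k := by
  classical
  by_contra hc
  push_neg at hc
  set n : ℕ → ℕ := fun k =>
    ((Finset.univ : Finset (S × S)).filter fun p => H k p.1 p.2).card with hn
  have hdec : ∀ k, n (k+1) < n k := by
    intro k
    apply Finset.card_lt_card
    rw [Finset.ssubset_iff_subset_ne]
    constructor
    · intro p hp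
      simp only [Finset.mem_filter] at hp ⊢
      exact ⟨hp.1, hmono k _ _ hp.2⟩
    · intro heq
      apply hc k
      funext X Y
      apply propext
      constructor
      · exact hmono k X Y
      · intro h
        have hm : (X, Y) ∈ (Finset.univ : Finset (S × S)).filter
            fun p => H k p.1 p.2 := by
          simp [h]
        rw [← heq] at hm
        simpa using hm
  have hle : ∀ k, n k + k ≤ n 0 := by
    intro k
    induction k with
    | zero => simp
    | succ k ih => have := hdec k; omega
  have := hle (n 0 + 1)
  omega

end AuxLemmas

/-- Correctness of the partition-refinement fixed point, for both the forward and the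
backward splitter: (a) each iterate refines the previous one; (b) every bisimulation
refining `G` refines every iterate; (c) a fixed point of the iteration is the coarsest
bisimulation refining `G`; (d) a fixed point is reached. -/
theorem stmt16 {S : Type*} [Fintype S] [DecidableEq S]
    (Rs : Finset (Reaction S)) (hpos : ∀ r ∈ Rs, 0 < r.rate)
    (G : S → S → Prop) (hG : Equivalence G)
    (Hf : ℕ → (S → S → Prop)) (hHf0 : Hf 0 = G)
    (hHfstep : ∀ k, Hf (k+1) = fun X Y => FSplit Rs (Hf k) X Y ∧ Hf k X Y)
    (Hb : ℕ → (S → S → Prop)) (hHb0 : Hb 0 = G)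
    (μs : ℕ → (S → S)) (hμs : ∀ k, IsChoice (Hb k) (μs k))
    (hHbstep : ∀ k, Hb (k+1) = fun X Y => BSplit Rs (μs k) X Y ∧ Hb k X Y) :
    -- (a)
    ((∀ k X Y, Hf (k+1) X Y → Hf k X Y) ∧ (∀ k X Y, Hb (k+1) X Y → Hb k X Y)) ∧
    -- (b)
    ((∀ r : S → S → Prop, IsFB Rs r → (∀ X Y, r X Y → G X Y) →
        ∀ k X Y, r X Y → Hf k X Y) ∧
     (∀ (r : S → S → Prop) (μ : S → S), IsBB Rs r μ → (∀ X Y, r X Y → G X Y) →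
        ∀ k X Y, r X Y → Hb k X Y)) ∧
    -- (c)
    ((∀ k, Hf (k+1) = Hf k →
        IsFB Rs (Hf (k+1)) ∧ (∀ X Y, Hf (k+1) X Y → G X Y) ∧
        ∀ r : S → S → Prop, IsFB Rs r → (∀ X Y, r X Y → G X Y) →
          ∀ X Y, r X Y → Hf (k+1) X Y) ∧
     (∀ k, Hb (k+1) = Hb k →
        IsBB Rs (Hb (k+1)) (μs (k+1)) ∧ (∀ X Y, Hb (k+1) X Y → G X Y) ∧
        ∀ (r : S → S → Prop) (μ : S → S), IsBB Rs r μ → (∀ X Y, r X Y → G X Y) →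
          ∀ X Y, r X Y → Hb (k+1) X Y)) ∧
    -- (d)
    ((∃ k, Hf (k+1) = Hf k) ∧ (∃ k, Hb (k+1) = Hb k)) := by
  classical
  -- each iterate is an equivalence relation
  have hfEq : ∀ k, Equivalence (Hf k) := by
    intro k
    induction k with
    | zero => rw [hHf0]; exact hG
    | succ k ih => rw [hHfstep k]; exact and_equiv (fsplit_equiv Rs (Hf k)) ih
  have hbEq : ∀ k, Equivalence (Hb k) := by
    intro k
    induction k with
    | zero => rw [hHb0]; exact hG
    | succ k ih => rw [hHbstep k]; exact and_equiv (bsplit_equiv Rs (μs k)) ih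
  -- (a)
  have haF : ∀ k X Y, Hf (k+1) X Y → Hf k X Y := by
    intro k X Y h; rw [hHfstep k] at h; exact h.2
  have haB : ∀ k X Y, Hb (k+1) X Y → Hb k X Y := by
    intro k X Y h; rw [hHbstep k] at h; exact h.2
  -- each iterate refines G
  have hfG : ∀ k X Y, Hf k X Y → G X Y := by
    intro k
    induction k with
    | zero => intro X Y h; rwa [hHf0] at h
    | succ k ih => intro X Y h; exact ih X Y (haF k X Y h)
  have hbG : ∀ k X Y, Hb k X Y → G X Y := by
    intro k
    induction k with
    | zero => intro X Y h; rwa [hHb0] at h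
    | succ k ih => intro X Y h; exact ih X Y (haB k X Y h)
  -- (b)
  have hbFwd : ∀ r : S → S → Prop, IsFB Rs r → (∀ X Y, r X Y → G X Y) →
      ∀ k X Y, r X Y → Hf k X Y := by
    intro r hrFB hrG k
    induction k with
    | zero => intro X Y h; rw [hHf0]; exact hrG X Y h
    | succ k ih =>
      intro X Y hXY
      rw [hHfstep k]
      exact ⟨fsplit_mono Rs r (Hf k) hrFB.1 (hfEq k) (fun a b => ih a b) X Y
        (hrFB.2 X Y hXY), ih X Y hXY⟩
  have hbBwd : ∀ (r : S → S → Prop) (μ : S → S), IsBB Rs r μ → (∀ X Y, r X Y → G X Y) →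
      ∀ k X Y, r X Y → Hb k X Y := by
    intro r μ hrBB hrG k
    induction k with
    | zero => intro X Y h; rw [hHb0]; exact hrG X Y h
    | succ k ih =>
      intro X Y hXY
      rw [hHbstep k]
      exact ⟨bsplit_mono Rs r (Hb k) (fun a b => ih a b) μ (μs k) hrBB.2.1 (hμs k) X Y
        (hrBB.2.2 X Y hXY), ih X Y hXY⟩
  refine ⟨⟨haF, haB⟩, ⟨hbFwd, hbBwd⟩, ⟨?_, ?_⟩, ?_, ?_⟩
  -- (c) forward
  · intro k h
    refine ⟨⟨hfEq (k+1), ?_⟩, fun X Y hXY => hfG (k+1) X Y hXY,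
      fun r hrFB hrG X Y hXY => hbFwd r hrFB hrG (k+1) X Y hXY⟩
    intro X Y hXY
    rw [hHfstep k] at hXY
    rw [h]
    exact hXY.1
  -- (c) backward
  · intro k h
    refine ⟨⟨hbEq (k+1), hμs (k+1), ?_⟩, fun X Y hXY => hbG (k+1) X Y hXY,
      fun r μ hrBB hrG X Y hXY => hbBwd r μ hrBB hrG (k+1) X Y hXY⟩
    intro X Y hXY
    rw [hHbstep k] at hXY
    have hchoice : IsChoice (Hb k) (μs (k+1)) := by
      have := hμs (k+1); rwa [h] at this
    exact bsplit_mono Rs (Hb k) (Hb k) (fun a b hab => hab) (μs k) (μs (k+1))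
      (hμs k) hchoice X Y hXY.1
  -- (d)
  · exact exists_fix Hf haF
  · exact exists_fix Hb haB
end
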